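/- arXiv:1409.4347 — 3 statements merged into one kernel-verified Lean document; each statement's English description precedes it below -/
import Mathlib

section
/- Let f, g : [a,b] → ℝ be functions positive on (a,b), with f affine and g convex, and suppose the one-sided limits lim_{t→a⁺} g(t)/f(t) and lim_{t→b⁻} g(t)/f(t) exist and are finite. Then for every t ∈ (a,b), g(t)/f(t) ≤ max{lim_{t→a⁺} g(t)/f(t), lim_{t→b⁻} g(t)/f(t)}. -/
/-!
If `f` is affine and `g` convex, then `g - m • f` is convex for every constant `m`, so it is
bounded on a segment by its values at the endpoints. Choosing `m` as the larger of the two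
endpoint ratios makes both endpoint values nonpositive, which bounds the ratio `g / f` inside the
segment by its values at the endpoints; letting the endpoints tend to `a` and `b` gives the claim.
-/

open Set Filter Topology

section Ratio

variable {𝕜 E : Type*} [Field 𝕜] [LinearOrder 𝕜] [IsStrictOrderedRing 𝕜] [AddCommGroup E]
  [Module 𝕜 E] {s : Set E} {f g : E → 𝕜}

theorem ConvexOn.sub_const_mul_of_affine (hg : ConvexOn 𝕜 s g) (hf : ConvexOn 𝕜 s f)
    (hf' : ConcaveOn 𝕜 s f) (c : 𝕜) : ConvexOn 𝕜 s fun x => g x - c * f x := by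
  rcases le_or_gt 0 c with hc | hc
  · exact (hg.sub (hf'.smul hc)).congr fun x _ => by simp
  · exact (hg.add (hf.smul (neg_nonneg.mpr hc.le))).congr fun x _ => by simp [sub_eq_add_neg]

theorem ConvexOn.div_le_max_div_of_affine (hg : ConvexOn 𝕜 s g) (hf : ConvexOn 𝕜 s f)
    (hf' : ConcaveOn 𝕜 s f) {x y z : E} (hx : x ∈ s) (hy : y ∈ s) (hz : z ∈ segment 𝕜 x y)
    (hfx : 0 < f x) (hfy : 0 < f y) (hfz : 0 < f z) :
    g z / f z ≤ max (g x / f x) (g y / f y) := by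
  set m := max (g x / f x) (g y / f y)
  have hgx : g x - m * f x ≤ 0 := by
    rw [sub_nonpos, ← div_le_iff₀ hfx]; exact le_max_left _ _
  have hgy : g y - m * f y ≤ 0 := by
    rw [sub_nonpos, ← div_le_iff₀ hfy]; exact le_max_right _ _
  have hgz : g z - m * f z ≤ 0 :=
    ((hg.sub_const_mul_of_affine hf hf' m).le_on_segment hx hy hz).trans (max_le hgx hgy)
  rwa [div_le_iff₀ hfz, ← sub_nonpos]

end Ratio

theorem eq_of_forall_combo_eq {a b : ℝ} {f : ℝ → ℝ}
    (hf : ∀ l ∈ Icc (0:ℝ) 1, f (l * a + (1 - l) * b) = l * f a + (1 - l) * f b) :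
    ∀ x ∈ Icc a b, f x = f b + (b - x) / (b - a) * (f a - f b) := by
  intro x hx
  have hl : (b - x) / (b - a) ∈ Icc (0:ℝ) 1 :=
    ⟨div_nonneg (by linarith [hx.2]) (by linarith [hx.1.trans hx.2]),
      div_le_one_of_le₀ (by linarith [hx.1]) (by linarith [hx.1.trans hx.2])⟩
  have hlx : (b - x) / (b - a) * (b - a) = b - x :=
    div_mul_cancel_of_imp fun h => by linarith [hx.1, hx.2]
  have hcombo : (b - x) / (b - a) * a + (1 - (b - x) / (b - a)) * b = x := by
    linear_combination -hlx
  rw [← hcombo, hf _ hl, hcombo]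
  ring

theorem convexOn_and_concaveOn_of_forall_combo_eq {a b : ℝ} {f : ℝ → ℝ}
    (hf : ∀ l ∈ Icc (0:ℝ) 1, f (l * a + (1 - l) * b) = l * f a + (1 - l) * f b) :
    ConvexOn ℝ (Icc a b) f ∧ ConcaveOn ℝ (Icc a b) f := by
  have hcombo : ∀ ⦃x⦄, x ∈ Icc a b → ∀ ⦃y⦄, y ∈ Icc a b → ∀ ⦃μ ν : ℝ⦄, 0 ≤ μ → 0 ≤ ν →
      μ + ν = 1 → f (μ • x + ν • y) = μ • f x + ν • f y := by
    intro x hx y hy μ ν hμ hν hμν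
    have hxy := convex_Icc a b hx hy hμ hν hμν
    simp only [smul_eq_mul] at hxy ⊢
    rw [eq_of_forall_combo_eq hf _ hxy, eq_of_forall_combo_eq hf _ hx,
      eq_of_forall_combo_eq hf _ hy]
    linear_combination (-(f b) - b / (b - a) * (f a - f b)) * hμν
  exact ⟨⟨convex_Icc a b, fun x hx y hy μ ν hμ hν hμν => (hcombo hx hy hμ hν hμν).le⟩,
    ⟨convex_Icc a b, fun x hx y hy μ ν hμ hν hμν => (hcombo hx hy hμ hν hμν).ge⟩⟩

theorem stmt_0_general (a b : ℝ) (f g : ℝ → ℝ)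
    (hf : ∀ l ∈ Icc (0:ℝ) 1, f (l * a + (1 - l) * b) = l * f a + (1 - l) * f b)
    (hg : ConvexOn ℝ (Icc a b) g)
    (hfpos : ∀ t ∈ Ioo a b, 0 < f t)
    (La Lb : ℝ)
    (hLa : Tendsto (fun t => g t / f t) (𝓝[>] a) (𝓝 La))
    (hLb : Tendsto (fun t => g t / f t) (𝓝[<] b) (𝓝 Lb)) :
    ∀ t ∈ Ioo a b, g t / f t ≤ max La Lb := by
  intro t ht
  obtain ⟨hf_convex, hf_concave⟩ := convexOn_and_concaveOn_of_forall_combo_eq hf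
  have hmax : Tendsto (fun p : ℝ × ℝ => max (g p.1 / f p.1) (g p.2 / f p.2))
      ((𝓝[>] a) ×ˢ (𝓝[<] b)) (𝓝 (max La Lb)) :=
    (hLa.comp tendsto_fst).max (hLb.comp tendsto_snd)
  refine ge_of_tendsto hmax ?_
  filter_upwards [prod_mem_prod (Ioo_mem_nhdsGT ht.1) (Ioo_mem_nhdsLT ht.2)]
    with ⟨s, u⟩ ⟨hs, hu⟩
  have hsu : s ≤ u := (hs.2.trans hu.1).le
  have hsub : Icc s u ⊆ Ioo a b := Icc_subset_Ioo hs.1 hu.2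
  have hs_mem : s ∈ Ioo a b := hsub (left_mem_Icc.mpr hsu)
  have hu_mem : u ∈ Ioo a b := hsub (right_mem_Icc.mpr hsu)
  exact hg.div_le_max_div_of_affine hf_convex hf_concave (Ioo_subset_Icc_self hs_mem)
    (Ioo_subset_Icc_self hu_mem) (Icc_subset_segment ⟨hs.2.le, hu.1.le⟩)
    (hfpos s hs_mem) (hfpos u hu_mem) (hfpos t ht)

theorem stmt_0 (a b : ℝ) (hab : a < b) (f g : ℝ → ℝ)
    (hf : ∀ l ∈ Icc (0:ℝ) 1, f (l * a + (1 - l) * b) = l * f a + (1 - l) * f b)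
    (hg : ConvexOn ℝ (Icc a b) g)
    (hfpos : ∀ t ∈ Ioo a b, 0 < f t) (hgpos : ∀ t ∈ Ioo a b, 0 < g t)
    (La Lb : ℝ)
    (hLa : Tendsto (fun t => g t / f t) (𝓝[>] a) (𝓝 La))
    (hLb : Tendsto (fun t => g t / f t) (𝓝[<] b) (𝓝 Lb)) :
    ∀ t ∈ Ioo a b, g t / f t ≤ max La Lb :=
  stmt_0_general a b f g hf hg hfpos La Lb hLa hLb
end

section
/- Let f, g : [a,b] → ℝ be functions positive on (a,b), with f affine and g convex, and suppose the one-sided limits L_a = lim_{t→a⁺} g(t)/f(t) and L_b = lim_{t→b⁻} g(t)/f(t) exist and are finite. If f(a) = 0, then for every t ∈ (a,b), g(t)/f(t) ≤ L_b. -/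
/-!
Since `f a = 0`, `f t = k (t - a)` with `k > 0`, and since `f → 0` at `a⁺` while `g / f` has a
finite limit there, also `g → 0` at `a⁺`. So `g / f` is, up to the factor `k`, the slope of `g`
from the point `(a, 0)`. Slopes of a convex function from a fixed point increase, hence `g / f`
is nondecreasing on `(a, b)` and bounded by its limit at `b⁻`.
-/

open Set Filter Topology

theorem eq_div_of_affine_on_Icc {a b : ℝ} (hab : a < b) {f : ℝ → ℝ}
    (hf : ∀ l ∈ Icc (0:ℝ) 1, f (l * a + (1 - l) * b) = l * f a + (1 - l) * f b)
    {x : ℝ} (hx : x ∈ Icc a b) :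
    f x = ((b - x) * f a + (x - a) * f b) / (b - a) := by
  have hba : 0 < b - a := sub_pos.2 hab
  have hl : (b - x) / (b - a) ∈ Icc (0:ℝ) 1 :=
    ⟨div_nonneg (by linarith [hx.2]) hba.le, (div_le_one hba).2 (by linarith [hx.1])⟩
  have hx_eq : (b - x) / (b - a) * a + (1 - (b - x) / (b - a)) * b = x := by
    field_simp; ring
  have hfx := hf _ hl
  rw [hx_eq] at hfx
  rw [hfx]
  field_simp
  ring

theorem ConvexOn.monotoneOn_slope_of_tendsto_nhdsGT {a b c : ℝ} {g : ℝ → ℝ}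
    (hg : ConvexOn ℝ (Ioo a b) g) (hc : Tendsto g (𝓝[>] a) (𝓝 c)) :
    MonotoneOn (fun t => (g t - c) / (t - a)) (Ioo a b) := by
  intro t ht s hs hts
  have hlim : ∀ x, a < x → Tendsto (fun r => (g x - g r) / (x - r)) (𝓝[>] a)
      (𝓝 ((g x - c) / (x - a))) := fun x hx =>
    (tendsto_const_nhds.sub hc).div
      (tendsto_const_nhds.sub (tendsto_id.mono_left nhdsWithin_le_nhds)) (sub_pos.2 hx).ne'
  refine le_of_tendsto_of_tendsto (hlim t ht.1) (hlim s hs.1) ?_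
  filter_upwards [Ioo_mem_nhdsGT ht.1] with r hr
  have hr' : r ∈ Ioo a b := ⟨hr.1, hr.2.trans ht.2⟩
  exact hg.secant_mono hr' ht hs hr.2.ne' (hr.2.trans_le hts).ne' hts

theorem MonotoneOn.le_of_tendsto_nhdsLT {α β : Type*} [LinearOrder α] [TopologicalSpace α]
    [OrderTopology α] [DenselyOrdered α] [NoMinOrder α] [Preorder β] [TopologicalSpace β]
    [ClosedIciTopology β] {a b : α} {φ : α → β} {L : β}
    (hφ : MonotoneOn φ (Ioo a b)) (hL : Tendsto φ (𝓝[<] b) (𝓝 L))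
    {t : α} (ht : t ∈ Ioo a b) : φ t ≤ L :=
  ge_of_tendsto hL <| by
    filter_upwards [Ioo_mem_nhdsLT ht.2] with s hs
    exact hφ ht ⟨ht.1.trans hs.1, hs.2⟩ hs.1.le

theorem Filter.Tendsto.tendsto_zero_of_div {α : Type*} {l : Filter α} {f g : α → ℝ} {L : ℝ}
    (hL : Tendsto (fun x => g x / f x) l (𝓝 L)) (hf : Tendsto f l (𝓝 0))
    (hf_ne : ∀ᶠ x in l, f x ≠ 0) : Tendsto g l (𝓝 0) := by
  rw [← mul_zero L]
  refine (hL.mul hf).congr' ?_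
  filter_upwards [hf_ne] with x hx using div_mul_cancel₀ _ hx

theorem stmt_1_general (a b : ℝ) (hab : a < b) (f g : ℝ → ℝ)
    (hf : ∀ l ∈ Icc (0:ℝ) 1, f (l * a + (1 - l) * b) = l * f a + (1 - l) * f b)
    (hg : ConvexOn ℝ (Icc a b) g)
    (hfpos : ∀ t ∈ Ioo a b, 0 < f t)
    (La Lb : ℝ)
    (hLa : Tendsto (fun t => g t / f t) (𝓝[>] a) (𝓝 La))
    (hLb : Tendsto (fun t => g t / f t) (𝓝[<] b) (𝓝 Lb))
    (hfa : f a = 0) :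
    ∀ t ∈ Ioo a b, g t / f t ≤ Lb := by
  intro t ht
  set k := f b / (b - a)
  have hf_lin : ∀ x ∈ Ioo a b, f x = (x - a) * k := fun x hx => by
    rw [eq_div_of_affine_on_Icc hab hf (Ioo_subset_Icc_self hx), hfa]; ring
  have hk : 0 < k := pos_of_mul_pos_right (hf_lin t ht ▸ hfpos t ht) (sub_pos.2 ht.1).le
  have hf0 : Tendsto f (𝓝[>] a) (𝓝 0) := by
    have : Tendsto (fun x => (x - a) * k) (𝓝[>] a) (𝓝 ((a - a) * k)) :=
      ((tendsto_id.sub_const a).mul_const k).mono_left nhdsWithin_le_nhds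
    rw [sub_self, zero_mul] at this
    refine this.congr' ?_
    filter_upwards [Ioo_mem_nhdsGT hab] with x hx using (hf_lin x hx).symm
  have hg0 : Tendsto g (𝓝[>] a) (𝓝 0) := hLa.tendsto_zero_of_div hf0 <| by
    filter_upwards [Ioo_mem_nhdsGT hab] with x hx using (hfpos x hx).ne'
  have hmono : MonotoneOn (fun x => g x / f x) (Ioo a b) := by
    intro x hx y hy hxy
    have hslope := ConvexOn.monotoneOn_slope_of_tendsto_nhdsGT
      (hg.subset Ioo_subset_Icc_self (convex_Ioo a b)) hg0 hx hy hxy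
    simp only [sub_zero] at hslope
    show g x / f x ≤ g y / f y
    rw [hf_lin x hx, hf_lin y hy, ← div_div, ← div_div]
    exact div_le_div_of_nonneg_right hslope hk.le
  exact hmono.le_of_tendsto_nhdsLT hLb ht

theorem stmt_1 (a b : ℝ) (hab : a < b) (f g : ℝ → ℝ)
    (hf : ∀ l ∈ Icc (0:ℝ) 1, f (l * a + (1 - l) * b) = l * f a + (1 - l) * f b)
    (hg : ConvexOn ℝ (Icc a b) g)
    (hfpos : ∀ t ∈ Ioo a b, 0 < f t) (hgpos : ∀ t ∈ Ioo a b, 0 < g t)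
    (La Lb : ℝ)
    (hLa : Tendsto (fun t => g t / f t) (𝓝[>] a) (𝓝 La))
    (hLb : Tendsto (fun t => g t / f t) (𝓝[<] b) (𝓝 Lb))
    (hfa : f a = 0) :
    ∀ t ∈ Ioo a b, g t / f t ≤ Lb :=
  stmt_1_general a b hab f g hf hg hfpos La Lb hLa hLb hfa
end

section
/- Let f : [-a,a] → ℝ be a nonnegative even concave function, a > 0, and let 0 < p < q. Then ((1+p)/(2a) · ∫_{-a}^{a} f(s)^p ds)^{1/p} ≥ ((1+q)/(2a) · ∫_{-a}^{a} f(s)^q ds)^{1/q}. -/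
/-!
By evenness and concavity `f` decreases on `[0, a]`, and both integrals are twice the integrals
over `[0, a]`. Choose `c` so that the linear function `h s = c (1 - s / a)` has the same `p`-th
moment as `f`; all normalized moments of `h` equal `c`. Since `f - h` is concave and
`h a = 0 ≤ f a`, `f` crosses `h` only once, at some `m`, and then `f s` lies between `f m` and
`h s`. The tangent-line inequality for `x ↦ x ^ (q / p)` at `f s ^ p`, together with the
monotonicity of its derivative, gives
`h s ^ q - f s ^ q ≥ (q / p) f(m) ^ (q - p) (h s ^ p - f s ^ p)`;
the right side integrates to `0`.
-/

open Set intervalIntegral MeasureTheory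

theorem Real.rpow_add_mul_rpow_sub_one_mul_sub_le_rpow {r u v : ℝ} (hr : 1 ≤ r) (hu : 0 ≤ u)
    (hv : 0 ≤ v) : v ^ r + r * v ^ (r - 1) * (u - v) ≤ u ^ r := by
  rcases hv.eq_or_lt with rfl | hv
  · rcases hr.eq_or_lt with rfl | hr
    · simp
    · simpa [Real.zero_rpow (by linarith : r ≠ 0), Real.zero_rpow (by linarith : r - 1 ≠ 0)]
        using Real.rpow_nonneg hu r
  · have bernoulli := one_add_mul_self_le_rpow_one_add (by linarith [div_nonneg hu hv.le] :
      -1 ≤ u / v - 1) hr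
    rw [add_sub_cancel, Real.div_rpow hu hv.le] at bernoulli
    have hvr : 0 < v ^ r := Real.rpow_pos_of_pos hv r
    rw [Real.rpow_sub_one hv.ne']
    calc v ^ r + r * (v ^ r / v) * (u - v) = v ^ r * (1 + r * (u / v - 1)) := by
          field_simp
      _ ≤ v ^ r * (u ^ r / v ^ r) := by gcongr
      _ = u ^ r := by field_simp

theorem Real.mul_rpow_sub_one_mul_sub_le_rpow_sub_rpow {r k u v : ℝ} (hr : 1 ≤ r) (hk : 0 ≤ k)
    (hu : 0 ≤ u) (hv : v ∈ uIcc k u) : r * k ^ (r - 1) * (u - v) ≤ u ^ r - v ^ r := by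
  have hv0 : 0 ≤ v := le_trans (le_min hk hu) hv.1
  have tangent := Real.rpow_add_mul_rpow_sub_one_mul_sub_le_rpow hr hu hv0
  have hr0 : 0 ≤ r := by linarith
  suffices r * k ^ (r - 1) * (u - v) ≤ r * v ^ (r - 1) * (u - v) by linarith
  rcases mem_uIcc.1 hv with ⟨hkv, hvu⟩ | ⟨huv, hvk⟩
  · gcongr
  · exact mul_le_mul_of_nonpos_right
      (mul_le_mul_of_nonneg_left (Real.rpow_le_rpow hv0 hvk (by linarith)) hr0) (by linarith)

theorem Real.div_mul_rpow_sub_mul_rpow_sub_rpow_le_rpow_sub_rpow {p q k u v : ℝ} (hp : 0 < p)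
    (hpq : p ≤ q) (hk : 0 ≤ k) (hu : 0 ≤ u) (hv : v ∈ uIcc k u) :
    q / p * k ^ (q - p) * (u ^ p - v ^ p) ≤ u ^ q - v ^ q := by
  have hsub : uIcc k u ⊆ Ici 0 := fun x hx => le_trans (le_min hk hu) hx.1
  have hvp : v ^ p ∈ uIcc (k ^ p) (u ^ p) :=
    ((Real.monotoneOn_rpow_Ici_of_exponent_nonneg hp.le).mono hsub).image_uIcc_subset
      (mem_image_of_mem _ hv)
  have hpow : ∀ x : ℝ, 0 ≤ x → (x ^ p) ^ (q / p) = x ^ q := fun x hx => by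
    rw [← Real.rpow_mul hx, mul_div_cancel₀ _ hp.ne']
  have hk' : (k ^ p) ^ (q / p - 1) = k ^ (q - p) := by
    rw [← Real.rpow_mul hk, mul_sub, mul_div_cancel₀ _ hp.ne', mul_one]
  have := Real.mul_rpow_sub_one_mul_sub_le_rpow_sub_rpow ((one_le_div hp).2 hpq)
    (Real.rpow_nonneg hk p) (Real.rpow_nonneg hu p) hvp
  rwa [hk', hpow u hu, hpow v (hsub hv)] at this

theorem integral_rpow_le_of_mem_uIcc {f g : ℝ → ℝ} {a b k p q : ℝ} (hab : a ≤ b) (hp : 0 < p)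
    (hpq : p ≤ q) (hk : 0 ≤ k) (hg : ∀ s ∈ Icc a b, 0 ≤ g s)
    (hfg : ∀ s ∈ Icc a b, f s ∈ uIcc k (g s))
    (hfp : IntervalIntegrable (fun s => f s ^ p) volume a b)
    (hgp : IntervalIntegrable (fun s => g s ^ p) volume a b)
    (hfq : IntervalIntegrable (fun s => f s ^ q) volume a b)
    (hgq : IntervalIntegrable (fun s => g s ^ q) volume a b)
    (heq : ∫ s in a..b, f s ^ p = ∫ s in a..b, g s ^ p) :
    ∫ s in a..b, f s ^ q ≤ ∫ s in a..b, g s ^ q := by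
  have key := integral_mono_on hab ((hgp.sub hfp).const_mul (q / p * k ^ (q - p))) (hgq.sub hfq)
    fun s hs => Real.div_mul_rpow_sub_mul_rpow_sub_rpow_le_rpow_sub_rpow hp hpq hk (hg s hs)
      (hfg s hs)
  rw [intervalIntegral.integral_const_mul, integral_sub hgp hfp, integral_sub hgq hfq, heq,
    sub_self, mul_zero] at key
  linarith

theorem integral_eq_two_mul_integral_of_even {g : ℝ → ℝ} {a : ℝ} (hg : ∀ x, g (-x) = g x)
    (hint : IntervalIntegrable g volume 0 a) :
    ∫ x in -a..a, g x = 2 * ∫ x in 0..a, g x := by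
  have hint' : IntervalIntegrable g volume (-a) 0 := by
    simpa [hg] using ((IntervalIntegrable.iff_comp_neg (f := g) (a := 0) (b := a)).1 hint).symm
  have hneg : ∫ x in -a..0, g x = ∫ x in 0..a, g x := by
    simpa [hg] using (integral_comp_neg (a := 0) (b := a) g).symm
  rw [← integral_add_adjacent_intervals hint' hint, hneg, two_mul]

theorem antitoneOn_of_even_of_concaveOn {f : ℝ → ℝ} {a : ℝ} (hfe : ∀ s, f (-s) = f s)
    (hfc : ConcaveOn ℝ (Icc (-a) a) f) : AntitoneOn f (Icc 0 a) := by
  rintro x ⟨hx0, -⟩ y ⟨hy0, hya⟩ hxy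
  have := hfc.min_le_of_mem_Icc (x := -y) (y := y) ⟨by linarith, by linarith⟩ ⟨by linarith, hya⟩
    ⟨by linarith, hxy⟩
  rwa [hfe, min_self] at this

theorem integral_linear_rpow {a c r : ℝ} (ha : 0 < a) (hc : 0 ≤ c) (hr : -1 < r) :
    ∫ s in 0..a, (c * (1 - s / a)) ^ r = c ^ r * a / (r + 1) := by
  have hfac : ∀ s ∈ uIcc 0 a, (c * (1 - s / a)) ^ r = (c / a) ^ r * (a - s) ^ r := by
    intro s hs
    rw [uIcc_of_le ha.le] at hs
    rw [← Real.mul_rpow (div_nonneg hc ha.le) (by linarith [hs.2])]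
    congr 1
    field_simp
  rw [integral_congr hfac, intervalIntegral.integral_const_mul]
  simp only [integral_comp_sub_left (fun x => x ^ r), sub_self, sub_zero]
  rw [integral_rpow (Or.inl hr), Real.zero_rpow (by linarith), Real.div_rpow hc ha.le,
    Real.rpow_add ha, Real.rpow_one]
  have : 0 < a ^ r := Real.rpow_pos_of_pos ha r
  field_simp
  ring

theorem exists_forall_mem_uIcc_of_concaveOn_of_antitoneOn {f g : ℝ → ℝ} {a b : ℝ} (hab : a ≤ b)
    (hfc : ConcaveOn ℝ (Icc a b) f) (hfa : AntitoneOn f (Icc a b)) (hgc : ConvexOn ℝ (Icc a b) g)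
    (hb : g b ≤ f b) : ∃ m ∈ Icc a b, ∀ s ∈ Icc a b, f s ∈ uIcc (f m) (g s) := by
  set T := {s ∈ Icc a b | 0 ≤ (f - g) s}
  have hT : Convex ℝ T := (hfc.sub hgc).convex_ge 0
  have hbT : b ∈ T := ⟨right_mem_Icc.2 hab, sub_nonneg.2 hb⟩
  have hTbdd : BddBelow T := ⟨a, fun s hs => hs.1.1⟩
  have hm : sInf T ∈ Icc a b := ⟨le_csInf ⟨b, hbT⟩ fun s hs => hs.1.1, csInf_le hTbdd hbT⟩
  refine ⟨sInf T, hm, fun s hs => ?_⟩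
  rcases lt_trichotomy s (sInf T) with hlt | rfl | hgt
  · have hgf : f s < g s := by
      by_contra! hfg
      exact (csInf_le hTbdd ⟨hs, sub_nonneg.2 hfg⟩).not_gt hlt
    exact mem_uIcc.2 (Or.inl ⟨hfa hs hm hlt.le, hgf.le⟩)
  · exact left_mem_uIcc
  · obtain ⟨t, htT, hts⟩ := exists_lt_of_csInf_lt ⟨b, hbT⟩ hgt
    have hsT : s ∈ T := hT.ordConnected.out htT hbT ⟨hts.le, hs.2⟩
    exact mem_uIcc.2 (Or.inr ⟨sub_nonneg.1 hsT.2, hfa hm hs hgt.le⟩)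

theorem intervalIntegrable_rpow_of_antitoneOn {f : ℝ → ℝ} {a b r : ℝ} (hab : a ≤ b)
    (hf0 : ∀ s ∈ Icc a b, 0 ≤ f s) (hfa : AntitoneOn f (Icc a b)) (hr : 0 ≤ r) :
    IntervalIntegrable (fun s => f s ^ r) volume a b :=
  AntitoneOn.intervalIntegrable <| by
    rw [uIcc_of_le hab]
    exact fun x hx y hy hxy => Real.rpow_le_rpow (hf0 y hy) (hfa hx hy hxy) hr

theorem integral_rpow_le_integral_linear_rpow {f : ℝ → ℝ} {a c p q : ℝ} (ha : 0 < a) (hc : 0 ≤ c)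
    (hf0 : ∀ s ∈ Icc 0 a, 0 ≤ f s) (hfc : ConcaveOn ℝ (Icc 0 a) f) (hfa : AntitoneOn f (Icc 0 a))
    (hp : 0 < p) (hpq : p ≤ q)
    (heq : ∫ s in 0..a, f s ^ p = ∫ s in 0..a, (c * (1 - s / a)) ^ p) :
    ∫ s in 0..a, f s ^ q ≤ ∫ s in 0..a, (c * (1 - s / a)) ^ q := by
  set h : ℝ → ℝ := fun s => c * (1 - s / a)
  have hh0 : ∀ s ∈ Icc 0 a, 0 ≤ h s := fun s hs =>
    mul_nonneg hc (sub_nonneg.2 ((div_le_one ha).2 hs.2))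
  have hhc : ConvexOn ℝ (Icc 0 a) h :=
    ⟨convex_Icc _ _, fun x _ y _ α β _ _ hαβ => le_of_eq (by
      simp only [h, smul_eq_mul]; linear_combination (-c) * hαβ)⟩
  obtain ⟨m, hm, hcross⟩ := exists_forall_mem_uIcc_of_concaveOn_of_antitoneOn ha.le hfc hfa hhc
    (by simpa [h, ha.ne'] using hf0 a (right_mem_Icc.2 ha.le))
  have hhint : ∀ r : ℝ, 0 ≤ r → IntervalIntegrable (fun s => h s ^ r) volume 0 a := fun r hr =>
    (Continuous.rpow_const (by fun_prop) fun _ => Or.inr hr).intervalIntegrable 0 a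
  exact integral_rpow_le_of_mem_uIcc ha.le hp hpq (hf0 m hm) hh0 hcross
    (intervalIntegrable_rpow_of_antitoneOn ha.le hf0 hfa hp.le) (hhint p hp.le)
    (intervalIntegrable_rpow_of_antitoneOn ha.le hf0 hfa (hp.le.trans hpq))
    (hhint q (hp.le.trans hpq)) heq

theorem rpow_mul_integral_rpow_le_of_concaveOn {f : ℝ → ℝ} {a p q : ℝ} (ha : 0 < a)
    (hf0 : ∀ s ∈ Icc 0 a, 0 ≤ f s) (hfc : ConcaveOn ℝ (Icc 0 a) f) (hfa : AntitoneOn f (Icc 0 a))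
    (hp : 0 < p) (hpq : p ≤ q) :
    ((1 + q) / a * ∫ s in 0..a, f s ^ q) ^ (1 / q) ≤
      ((1 + p) / a * ∫ s in 0..a, f s ^ p) ^ (1 / p) := by
  have hq : 0 < q := hp.trans_le hpq
  have hmoment : ∀ r : ℝ, 0 < r → 0 ≤ (1 + r) / a * ∫ s in 0..a, f s ^ r := fun r hr =>
    mul_nonneg (by positivity) (integral_nonneg ha.le fun s hs => Real.rpow_nonneg (hf0 s hs) r)
  set c := ((1 + p) / a * ∫ s in 0..a, f s ^ p) ^ (1 / p)
  have hc : 0 ≤ c := Real.rpow_nonneg (hmoment p hp) _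
  have hcp : c ^ p = (1 + p) / a * ∫ s in 0..a, f s ^ p := by
    rw [← Real.rpow_mul (hmoment p hp), one_div_mul_cancel hp.ne', Real.rpow_one]
  have key := integral_rpow_le_integral_linear_rpow ha hc hf0 hfc hfa hp hpq <| by
    rw [integral_linear_rpow ha hc (by linarith), hcp]
    field_simp
    ring
  rw [integral_linear_rpow ha hc (by linarith)] at key
  calc ((1 + q) / a * ∫ s in 0..a, f s ^ q) ^ (1 / q)
      ≤ ((1 + q) / a * (c ^ q * a / (q + 1))) ^ (1 / q) := by
        gcongr
        exact hmoment q hq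
    _ = c := by
        rw [show (1 + q) / a * (c ^ q * a / (q + 1)) = c ^ q by field_simp; ring,
          ← Real.rpow_mul hc, mul_one_div_cancel hq.ne', Real.rpow_one]

theorem stmt_4 (a : ℝ) (ha : 0 < a) (f : ℝ → ℝ)
    (hf0 : ∀ s ∈ Icc (-a) a, 0 ≤ f s)
    (hfe : ∀ s, f (-s) = f s)
    (hfc : ConcaveOn ℝ (Icc (-a) a) f)
    (p q : ℝ) (hp : 0 < p) (hpq : p < q) :
    ((1 + p) / (2 * a) * ∫ s in (-a)..a, f s ^ p) ^ (1 / p) ≥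
      ((1 + q) / (2 * a) * ∫ s in (-a)..a, f s ^ q) ^ (1 / q) := by
  have hhalf : Icc 0 a ⊆ Icc (-a) a := Icc_subset_Icc (by linarith) le_rfl
  have hf0' : ∀ s ∈ Icc 0 a, 0 ≤ f s := fun s hs => hf0 s (hhalf hs)
  have hfa : AntitoneOn f (Icc 0 a) := antitoneOn_of_even_of_concaveOn hfe hfc
  have hsymm : ∀ r : ℝ, 0 < r →
      (1 + r) / (2 * a) * ∫ s in (-a)..a, f s ^ r = (1 + r) / a * ∫ s in 0..a, f s ^ r := by
    intro r hr
    rw [integral_eq_two_mul_integral_of_even (fun s => by rw [hfe])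
      (intervalIntegrable_rpow_of_antitoneOn ha.le hf0' hfa hr.le)]
    field_simp
  rw [ge_iff_le, hsymm p hp, hsymm q (hp.trans hpq)]
  exact rpow_mul_integral_rpow_le_of_concaveOn ha hf0' (hfc.subset hhalf (convex_Icc 0 a)) hfa hp
    hpq.le
end
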